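/- Let k > 0. The inequality (k·(log t)² + 1) − ((t+1)/(t−1))·log t + 1 ≥ 0 holds for every t ∈ (0, ∞) with t ≠ 1 if and only if k ≥ 1/6. -/

import Mathlib

/-!
Put `t = eˢ`. Then `(t + 1)/(t - 1) · log t = s·coth(s/2)`, an even function of `s` with expansion
`2 + s²/6 - s⁴/360 + ⋯`, so the inequality reads `k s² + 2 ≥ s·coth(s/2)`. For `s > 0` both
`s·coth(s/2) ≤ 2 + s²/6` (giving sufficiency) and `2 + s²/6 - eˢs⁴/360 ≤ s·coth(s/2)` (giving
necessity, by letting `s → 0`) follow by integrating three times the third derivative `eˢs²/6` of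
`(eˢ - 1)(2 + s²/6 - s·coth(s/2))`, which vanishes to third order at `0`.
-/

open Real

theorem le_of_hasDerivAt_le {f f' g g' : ℝ → ℝ} {a : ℝ}
    (hf : ∀ y, HasDerivAt f (f' y) y) (hg : ∀ y, HasDerivAt g (g' y) y)
    (ha : f a ≤ g a) (hle : ∀ y, a ≤ y → f' y ≤ g' y) : ∀ x, a ≤ x → f x ≤ g x := fun _ hx =>
  image_le_of_deriv_right_le_deriv_boundary
    (fun y _ => (hf y).continuousAt.continuousWithinAt) (fun y _ => (hf y).hasDerivWithinAt) ha
    (fun y _ => (hg y).continuousAt.continuousWithinAt) (fun y _ => (hg y).hasDerivWithinAt)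
    (fun y hy => hle y hy.1) ⟨hx, le_rfl⟩

theorem le_mul_exp_mul_pow_succ_of_hasDerivAt {f f' : ℝ → ℝ} {c : ℝ} (n : ℕ) (hc : 0 ≤ c)
    (hf : ∀ x, HasDerivAt f (f' x) x) (h0 : f 0 ≤ 0)
    (hf' : ∀ x, 0 ≤ x → f' x ≤ c * exp x * x ^ n) {x : ℝ} (hx : 0 ≤ x) :
    f x ≤ c / (n + 1) * exp x * x ^ (n + 1) := by
  refine le_of_hasDerivAt_le (g := fun y => c / (n + 1) * exp y * y ^ (n + 1)) hf
    (fun y => ((hasDerivAt_exp y).const_mul _).mul (hasDerivAt_pow (n + 1) y))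
    (by simpa using h0) (fun y hy => (hf' y hy).trans ?_) x hx
  field_simp
  push_cast
  nlinarith [mul_nonneg hc (pow_nonneg hy (n + 1))]

/-- `(eˢ - 1)(2 + s²/6 - s·coth(s/2))`. -/
noncomputable def cothRemainder (s : ℝ) : ℝ := (s ^ 2 / 6 + 2) * (exp s - 1) - s * (exp s + 1)

theorem hasDerivAt_cothRemainder (x : ℝ) :
    HasDerivAt cothRemainder (exp x * (x ^ 2 / 6 - 2 * x / 3 + 1) - x / 3 - 1) x := by
  have := ((((hasDerivAt_pow 2 x).div_const 6).add_const 2).mul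
    ((hasDerivAt_exp x).sub_const 1)).sub ((hasDerivAt_id x).mul ((hasDerivAt_exp x).add_const 1))
  refine this.congr_deriv ?_
  simp only [id_eq, Nat.cast_ofNat, Nat.add_one_sub_one, pow_one]
  ring

theorem hasDerivAt_cothRemainder_deriv (x : ℝ) :
    HasDerivAt (fun s => exp s * (s ^ 2 / 6 - 2 * s / 3 + 1) - s / 3 - 1)
      (exp x * (x ^ 2 / 6 - x / 3 + 1 / 3) - 1 / 3) x := by
  have := (((hasDerivAt_exp x).mul ((((hasDerivAt_pow 2 x).div_const 6).sub
    (((hasDerivAt_id x).const_mul 2).div_const 3)).add_const 1)).sub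
    ((hasDerivAt_id x).div_const 3)).sub_const 1
  refine this.congr_deriv ?_
  simp only [id_eq, Pi.sub_apply, Nat.cast_ofNat, Nat.add_one_sub_one, pow_one]
  ring

theorem hasDerivAt_cothRemainder_deriv_deriv (x : ℝ) :
    HasDerivAt (fun s => exp s * (s ^ 2 / 6 - s / 3 + 1 / 3) - 1 / 3)
      (1 / 6 * exp x * x ^ 2) x := by
  have := ((hasDerivAt_exp x).mul ((((hasDerivAt_pow 2 x).div_const 6).sub
    ((hasDerivAt_id x).div_const 3)).add_const (1 / 3))).sub_const (1 / 3)
  refine this.congr_deriv ?_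
  simp only [id_eq, Pi.sub_apply, Nat.cast_ofNat, Nat.add_one_sub_one, pow_one]
  ring

theorem cothRemainder_nonneg {s : ℝ} (hs : 0 ≤ s) : 0 ≤ cothRemainder s := by
  have h₂ := le_of_hasDerivAt_le (a := 0) (fun _ => hasDerivAt_const _ (0 : ℝ))
    hasDerivAt_cothRemainder_deriv_deriv (by simp) (fun y _ => by positivity)
  have h₁ := le_of_hasDerivAt_le (a := 0) (fun _ => hasDerivAt_const _ (0 : ℝ))
    hasDerivAt_cothRemainder_deriv (by simp) h₂
  exact le_of_hasDerivAt_le (a := 0) (fun _ => hasDerivAt_const _ (0 : ℝ))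
    hasDerivAt_cothRemainder (by simp [cothRemainder]) h₁ s hs

theorem cothRemainder_le {s : ℝ} (hs : 0 ≤ s) : cothRemainder s ≤ 1 / 360 * exp s * s ^ 5 := by
  have h₂ {x : ℝ} (hx : 0 ≤ x) :
      exp x * (x ^ 2 / 6 - x / 3 + 1 / 3) - 1 / 3 ≤ 1 / 18 * exp x * x ^ 3 := by
    convert le_mul_exp_mul_pow_succ_of_hasDerivAt 2 (by norm_num)
      hasDerivAt_cothRemainder_deriv_deriv (by simp) (fun _ _ => le_rfl) hx using 2
    norm_num
  have h₁ {x : ℝ} (hx : 0 ≤ x) :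
      exp x * (x ^ 2 / 6 - 2 * x / 3 + 1) - x / 3 - 1 ≤ 1 / 72 * exp x * x ^ 4 := by
    convert le_mul_exp_mul_pow_succ_of_hasDerivAt 3 (by norm_num) hasDerivAt_cothRemainder_deriv
      (by simp) (fun _ => h₂) hx using 2
    norm_num
  convert le_mul_exp_mul_pow_succ_of_hasDerivAt 4 (by norm_num) hasDerivAt_cothRemainder
    (by simp [cothRemainder]) (fun _ => h₁) hs using 2
  norm_num

theorem exp_neg_add_one_div_exp_neg_sub_one_mul_neg (s : ℝ) :
    (exp (-s) + 1) / (exp (-s) - 1) * -s = (exp s + 1) / (exp s - 1) * s := by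
  rcases eq_or_ne s 0 with rfl | hs
  · simp
  have hne : exp s ≠ 1 := (exp_eq_one_iff s).not.2 hs
  have : exp s - 1 ≠ 0 := sub_ne_zero.2 hne
  have : 1 - exp s ≠ 0 := sub_ne_zero.2 hne.symm
  rw [exp_neg]
  field_simp
  ring

theorem exp_add_one_div_exp_sub_one_mul_le (s : ℝ) :
    (exp s + 1) / (exp s - 1) * s ≤ 2 + s ^ 2 / 6 := by
  wlog hs : 0 ≤ s generalizing s
  · have := this (-s) (by linarith)
    rwa [exp_neg_add_one_div_exp_neg_sub_one_mul_neg, neg_sq] at this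
  rcases hs.eq_or_lt with rfl | hs
  · norm_num
  have he : 0 < exp s - 1 := sub_pos.2 (one_lt_exp_iff.2 hs)
  have := cothRemainder_nonneg hs.le
  rw [div_mul_eq_mul_div, div_le_iff₀ he]
  unfold cothRemainder at this
  linarith

theorem le_exp_add_one_div_exp_sub_one_mul {s : ℝ} (hs : 0 < s) :
    2 + s ^ 2 / 6 - 1 / 360 * exp s * s ^ 4 ≤ (exp s + 1) / (exp s - 1) * s := by
  have he : s ≤ exp s - 1 := by linarith [add_one_le_exp s]
  have := cothRemainder_le hs.le
  rw [div_mul_eq_mul_div _ _ s, le_div_iff₀ (hs.trans_le he)]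
  unfold cothRemainder at this
  linarith [mul_le_mul_of_nonneg_left he (by positivity : 0 ≤ 1 / 360 * exp s * s ^ 4)]

theorem exists_pos_exp_mul_sq_lt {ε : ℝ} (hε : 0 < ε) :
    ∃ s > 0, 1 / 360 * exp s * s ^ 2 < ε := by
  have hcont : Continuous (fun s : ℝ => 1 / 360 * exp s * s ^ 2) := by fun_prop
  have hlim := (hcont.tendsto' 0 0 (by simp)).mono_left (nhdsWithin_le_nhds (s := Set.Ioi 0))
  obtain ⟨s, hs, hsmall⟩ :=
    (eventually_mem_nhdsWithin.and (hlim.eventually (gt_mem_nhds hε))).exists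
  exact ⟨s, hs, hsmall⟩

theorem hencky_aux_ineq_iff (k : ℝ) :
    (∀ t : ℝ, 0 < t → t ≠ 1 →
      0 ≤ (k * Real.log t ^ 2 + 1) - (t + 1) / (t - 1) * Real.log t + 1) ↔
    1 / 6 ≤ k := by
  constructor
  · intro H
    by_contra! hk
    obtain ⟨s, hs, hsmall⟩ := exists_pos_exp_mul_sq_lt (sub_pos.2 hk)
    have h := H (exp s) (exp_pos s) (one_lt_exp_iff.2 hs).ne'
    rw [log_exp] at h
    linarith [le_exp_add_one_div_exp_sub_one_mul hs, mul_lt_mul_of_pos_left hsmall (pow_pos hs 2)]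
  · intro hk t ht _
    have := exp_add_one_div_exp_sub_one_mul_le (log t)
    rw [exp_log ht] at this
    linarith [mul_le_mul_of_nonneg_right hk (sq_nonneg (log t))]
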